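/- arXiv:2502.02869 — 3 statements merged into one kernel-verified Lean document; each statement's English description precedes it below -/
import Mathlib

section
/- Let P be an irreducible row-stochastic matrix on a finite state space. Then P has a unique stationary distribution, and this distribution is strictly positive at every state. -/
/-!
A row-stochastic `P` fixes the all-ones column vector, so `P - 1` is singular and has a nonzero
left null vector `v`. Since `|v| ≤ |v| P` entrywise and both sides have the same total mass, `|v|`
is stationary too, and normalizing it gives a stationary distribution. Irreducibility makes every
nonzero nonnegative stationary vector strictly positive, as mass at one state reaches every other
state. For uniqueness, let `r` be the difference of two stationary distributions. If `r` had a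
positive entry, the nonnegative stationary vector `|r| + r` would be positive everywhere, and hence
so would `r`; thus `r ≤ 0`, and since `r` has total mass zero, `r = 0`.
-/

open Finset

namespace Matrix

variable {R n : Type*} [Fintype n] [DecidableEq n] [Field R] [LinearOrder R]
  [IsStrictOrderedRing R] {P : Matrix n n R}

lemma exists_ne_zero_vecMul_eq_self_of_mem_rowStochastic [Nonempty n]
    (hP : P ∈ rowStochastic R n) : ∃ v ≠ 0, v ᵥ* P = v := by
  have hdet : (P - 1).det = 0 :=
    exists_mulVec_eq_zero_iff.1 ⟨1, one_ne_zero, by rw [sub_mulVec, hP.2, one_mulVec, sub_self]⟩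
  obtain ⟨v, hv, hvP⟩ := exists_vecMul_eq_zero_iff.2 hdet
  exact ⟨v, hv, by rwa [vecMul_sub, vecMul_one, sub_eq_zero] at hvP⟩

lemma abs_vecMul_eq_self_of_mem_rowStochastic (hP : P ∈ rowStochastic R n) {v : n → R}
    (hv : v ᵥ* P = v) : |v| ᵥ* P = |v| := by
  have hle : ∀ j, |v| j ≤ (|v| ᵥ* P) j := fun j => calc
    |v| j = |∑ i, v i * P i j| := (congrArg abs (congrFun hv j)).symm
    _ ≤ ∑ i, |v i * P i j| := abs_sum_le_sum_abs _ _
    _ = (|v| ᵥ* P) j := by simp [vecMul, dotProduct, abs_mul, abs_of_nonneg (hP.1 _ _)]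
  have hmass : ∑ j, |v| j = ∑ j, (|v| ᵥ* P) j := by
    simp only [← dotProduct_one, ← dotProduct_mulVec, hP.2]
  exact funext fun j => ((sum_eq_sum_iff_of_le fun j _ => hle j).1 hmass j (mem_univ j)).symm

lemma exists_mem_stdSimplex_vecMul_eq_self [Nonempty n] (hP : P ∈ rowStochastic R n) :
    ∃ p ∈ stdSimplex R n, p ᵥ* P = p := by
  obtain ⟨v, hv, hvP⟩ := exists_ne_zero_vecMul_eq_self_of_mem_rowStochastic hP
  have hmass : 0 < ∑ i, |v i| := by
    obtain ⟨i, hi⟩ := Function.ne_iff.1 hv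
    exact sum_pos' (fun j _ => abs_nonneg _) ⟨i, mem_univ i, abs_pos.2 hi⟩
  refine ⟨(∑ i, |v i|)⁻¹ • |v|, ⟨fun i => ?_, ?_⟩, ?_⟩
  · exact mul_nonneg (inv_nonneg.2 hmass.le) (abs_nonneg _)
  · simp [← mul_sum, hmass.ne']
  · rw [smul_vecMul, abs_vecMul_eq_self_of_mem_rowStochastic hP hvP]

lemma pos_of_vecMul_eq_self (hirr : IsIrreducible P) {w : n → R} (hw : 0 ≤ w)
    (hwP : w ᵥ* P = w) {t : n} (ht : 0 < w t) (s : n) : 0 < w s := by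
  have hwPk (k : ℕ) : w ᵥ* P ^ k = w := by
    induction k with
    | zero => simp
    | succ k ih => rw [pow_succ, ← vecMul_vecMul, ih, hwP]
  obtain ⟨k, -, hk⟩ := (isIrreducible_iff_exists_pow_pos hirr.nonneg).1 hirr t s
  calc 0 < w t * (P ^ k) t s := mul_pos ht hk
    _ ≤ ∑ i, w i * (P ^ k) i s :=
      single_le_sum (fun i _ => mul_nonneg (hw i) (pow_apply_nonneg hirr.nonneg k i s)) (mem_univ t)
    _ = w s := congrFun (hwPk k) s

lemma pos_of_mem_stdSimplex_of_vecMul_eq_self (hirr : IsIrreducible P) {p : n → R}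
    (hp : p ∈ stdSimplex R n) (hpP : p ᵥ* P = p) (s : n) : 0 < p s := by
  obtain ⟨t, -, ht⟩ := exists_lt_of_sum_lt (s := univ) (f := 0) (g := p) (by simp [hp.2])
  exact pos_of_vecMul_eq_self hirr hp.1 hpP ht s

lemma eq_zero_of_vecMul_eq_self_of_sum_eq_zero (hP : P ∈ rowStochastic R n)
    (hirr : IsIrreducible P) {r : n → R} (hrP : r ᵥ* P = r)
    (hr : ∑ i, r i = 0) : r = 0 := by
  have hwP : (|r| + r) ᵥ* P = |r| + r := by
    rw [add_vecMul, abs_vecMul_eq_self_of_mem_rowStochastic hP hrP, hrP]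
  have hw : 0 ≤ |r| + r := fun i => neg_le_iff_add_nonneg'.1 (neg_abs_le (r i))
  have hnonpos : ∀ i, r i ≤ 0 := by
    intro t
    by_contra! ht
    have hpos : ∀ s, 0 < r s := fun s => by
      have := pos_of_vecMul_eq_self hirr hw hwP (t := t) (by simp [abs_of_pos ht, ht]) s
      by_contra! hs
      simp [abs_of_nonpos hs] at this
    exact (sum_pos (fun s _ => hpos s) ⟨t, mem_univ t⟩).ne' hr
  exact funext ((sum_eq_zero_iff_of_nonpos fun i _ => hnonpos i).1 hr · (mem_univ _))

lemma eq_of_mem_stdSimplex_of_vecMul_eq_self (hP : P ∈ rowStochastic R n)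
    (hirr : IsIrreducible P) {p q : n → R} (hp : p ∈ stdSimplex R n)
    (hq : q ∈ stdSimplex R n) (hpP : p ᵥ* P = p) (hqP : q ᵥ* P = q) : p = q := by
  refine (sub_eq_zero.1 (eq_zero_of_vecMul_eq_self_of_sum_eq_zero hP hirr ?_ ?_)).symm
  · rw [sub_vecMul, hpP, hqP]
  · simp [sum_sub_distrib, hp.2, hq.2]

end Matrix

open Matrix

/-- An irreducible row-stochastic matrix on a finite state space has a unique
stationary distribution, which is strictly positive at every state. -/
theorem stmt4 {S : Type*} [Fintype S] [DecidableEq S] [Nonempty S]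
    (P : Matrix S S ℝ)
    (hPnn : ∀ i j, 0 ≤ P i j)
    (hProw : ∀ i, ∑ j, P i j = 1)
    (hirr : ∀ i j, ∃ k : ℕ, 1 ≤ k ∧ 0 < (P ^ k) i j) :
    (∃! p : S → ℝ,
      (∀ s, 0 ≤ p s) ∧ (∑ s, p s = 1) ∧ (∀ j, ∑ i, p i * P i j = p j)) ∧
    (∀ p : S → ℝ,
      ((∀ s, 0 ≤ p s) ∧ (∑ s, p s = 1) ∧ (∀ j, ∑ i, p i * P i j = p j)) →
      ∀ s, 0 < p s) := by
  have hP : P ∈ rowStochastic ℝ S := mem_rowStochastic_iff_sum.2 ⟨hPnn, hProw⟩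
  have hPirr : IsIrreducible P := (isIrreducible_iff_exists_pow_pos hPnn).2 hirr
  have hstat (p : S → ℝ) : (∀ j, ∑ i, p i * P i j = p j) ↔ p ᵥ* P = p := funext_iff.symm
  obtain ⟨p, hp, hpP⟩ := exists_mem_stdSimplex_vecMul_eq_self hP
  refine ⟨⟨p, ⟨hp.1, hp.2, (hstat p).2 hpP⟩, ?_⟩, ?_⟩
  · rintro q ⟨hq0, hq1, hqP⟩
    exact eq_of_mem_stdSimplex_of_vecMul_eq_self hP hPirr ⟨hq0, hq1⟩ hp ((hstat q).1 hqP) hpP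
  · rintro q ⟨hq0, hq1, hqP⟩
    exact pos_of_mem_stdSimplex_of_vecMul_eq_self hPirr ⟨hq0, hq1⟩ ((hstat q).1 hqP)
end

section
/- Under the banded structure of the previous statement with the additional assumption that P(j|i) ≤ 1-η for all j > i (upward mass at most 1-η at every state), the k-step probability of moving upward by m states satisfies (P^k)(i+m | i) ≤ C(k, ⌈m/b⁺⌉) · (1-η)^{⌈m/b⁺⌉}, where C(k,r) is the binomial coefficient counting the choice of which steps move upward. -/
/-!
A path of `K` steps climbing from `a` to `b` must make at least `⌈(b - a)/b⁺⌉` upward steps,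
since each step climbs at most `b⁺`. Conditioning on the first step gives the Pascal-type
recursion `u(K+1, r) ≤ c · u(K, r-1) + u(K, r)` for the worst-case probability `u(K, r)` of
needing `r` further upward steps, where `c` bounds the upward mass; `C(K, r) cʳ` solves it.
-/

open Finset

namespace Matrix

variable {n bp : ℕ} {c : ℝ} {P : Matrix (Fin n) (Fin n) ℝ}

theorem sum_mul_le_of_upward_sum_le (hP : P ∈ rowStochastic ℝ (Fin n))
    (hband : ∀ a l : Fin n, a.val + bp < l.val → P a l = 0)
    {a : Fin n} (hup : ∑ l ∈ univ.filter (fun l : Fin n => a.val < l.val), P a l ≤ c)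
    {v : Fin n → ℝ} {x y : ℝ} (hx : 0 ≤ x) (hy : 0 ≤ y)
    (hlow : ∀ l : Fin n, l.val ≤ a.val → v l ≤ x)
    (hhigh : ∀ l : Fin n, a.val < l.val → l.val ≤ a.val + bp → v l ≤ y) :
    ∑ l, P a l * v l ≤ c * y + x := by
  have hnn : ∀ l, 0 ≤ P a l := fun l => nonneg_of_mem_rowStochastic hP
  rw [← sum_filter_add_sum_filter_not univ (fun l : Fin n => a.val < l.val)]
  gcongr
  · calc ∑ l ∈ univ.filter (fun l : Fin n => a.val < l.val), P a l * v l
        ≤ ∑ l ∈ univ.filter (fun l : Fin n => a.val < l.val), P a l * y := by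
          refine sum_le_sum fun l hl => ?_
          by_cases hjump : a.val + bp < l.val
          · simp [hband a l hjump]
          · exact mul_le_mul_of_nonneg_left
              (hhigh l (mem_filter.mp hl).2 (not_lt.mp hjump)) (hnn l)
      _ ≤ c * y := by rw [← sum_mul]; exact mul_le_mul_of_nonneg_right hup hy
  · calc ∑ l ∈ univ.filter (fun l : Fin n => ¬ a.val < l.val), P a l * v l
        ≤ ∑ l ∈ univ.filter (fun l : Fin n => ¬ a.val < l.val), P a l * x :=
          sum_le_sum fun l hl =>
            mul_le_mul_of_nonneg_left (hlow l (not_lt.mp (mem_filter.mp hl).2)) (hnn l)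
      _ ≤ ∑ l, P a l * x :=
          sum_le_sum_of_subset_of_nonneg (filter_subset _ _)
            fun l _ _ => mul_nonneg (hnn l) hx
      _ = x := by rw [← sum_mul, sum_row_of_mem_rowStochastic hP, one_mul]

/-- The hypothesis `a + r * bp < b + bp` encodes `r ≤ ⌈(b - a) / bp⌉` without division. -/
theorem pow_apply_le_choose_mul_pow (hP : P ∈ rowStochastic ℝ (Fin n))
    (hband : ∀ a l : Fin n, a.val + bp < l.val → P a l = 0)
    (hup : ∀ a : Fin n, ∑ l ∈ univ.filter (fun l : Fin n => a.val < l.val), P a l ≤ c) :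
    ∀ (K r : ℕ) (a b : Fin n), a.val + r * bp < b.val + bp →
      (P ^ K) a b ≤ K.choose r * c ^ r := by
  intro K
  induction K with
  | zero =>
    rintro (_ | r) a b hab
    · simpa using le_one_of_mem_rowStochastic (pow_mem hP 0)
    · have hne : a ≠ b := fun h => by subst h; nlinarith
      simp [one_apply_ne hne]
  | succ K ih =>
    rintro (_ | s) a b hab
    · simpa using le_one_of_mem_rowStochastic (pow_mem hP (K + 1))
    have hc : 0 ≤ c := (sum_nonneg fun l _ => nonneg_of_mem_rowStochastic hP).trans (hup a)
    calc (P ^ (K + 1)) a b = ∑ l, P a l * (P ^ K) l b := by rw [pow_succ', mul_apply]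
      _ ≤ c * (K.choose s * c ^ s) + K.choose (s + 1) * c ^ (s + 1) :=
        sum_mul_le_of_upward_sum_le hP hband (hup a) (by positivity) (by positivity)
          (fun l hl => ih (s + 1) l b (by omega)) (fun l _ hl => ih s l b (by nlinarith))
      _ = (K + 1).choose (s + 1) * c ^ (s + 1) := by
        rw [Nat.choose_succ_succ']
        push_cast
        ring

end Matrix

theorem stmt10_general (n bm bp : ℕ)
    (η : ℝ)
    (P : Matrix (Fin n) (Fin n) ℝ)
    (hPnn : ∀ i j, 0 ≤ P i j)
    (hProw : ∀ i, ∑ j, P i j = 1)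
    (hband : ∀ i j : Fin n, (j.val + bm < i.val ∨ i.val + bp < j.val) → P i j = 0)
    (hup : ∀ i : Fin n,
      ∑ j ∈ Finset.univ.filter (fun j : Fin n => i.val < j.val), P i j ≤ 1 - η)
    (m k : ℕ) (hm : 1 ≤ m)
    (i j : Fin n) (hij : j.val = i.val + m) :
    (P ^ k) i j ≤ (k.choose ((m + bp - 1) / bp) : ℝ) * (1 - η) ^ ((m + bp - 1) / bp) := by
  have hP : P ∈ Matrix.rowStochastic ℝ (Fin n) :=
    Matrix.mem_rowStochastic_iff_sum.mpr ⟨hPnn, hProw⟩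
  refine Matrix.pow_apply_le_choose_mul_pow hP (fun a l h => hband a l (Or.inr h)) hup
    k _ i j ?_
  have hceil := Nat.div_mul_le_self (m + bp - 1) bp
  omega

/-- Under the banded structure with total upward mass at most `1-η` at every state,
the `k`-step probability of moving up by `m` states is bounded by
`C(k, ⌈m/b⁺⌉)·(1-η)^{⌈m/b⁺⌉}`. -/
theorem stmt10 (n bm bp : ℕ) (hbm : 1 ≤ bm) (hbp : 1 ≤ bp)
    (η : ℝ) (hη0 : 0 < η) (hη1 : η < 1)
    (P : Matrix (Fin n) (Fin n) ℝ)
    (hPnn : ∀ i j, 0 ≤ P i j)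
    (hProw : ∀ i, ∑ j, P i j = 1)
    (hband : ∀ i j : Fin n, (j.val + bm < i.val ∨ i.val + bp < j.val) → P i j = 0)
    (hup : ∀ i : Fin n,
      ∑ j ∈ Finset.univ.filter (fun j : Fin n => i.val < j.val), P i j ≤ 1 - η)
    (m k : ℕ) (hm : 1 ≤ m) (hk : (m + bp - 1) / bp ≤ k)
    (i j : Fin n) (hij : j.val = i.val + m) :
    (P ^ k) i j ≤ (k.choose ((m + bp - 1) / bp) : ℝ) * (1 - η) ^ ((m + bp - 1) / bp) :=
  stmt10_general n bm bp η P hPnn hProw hband hup m k hm i j hij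
end

section
/- If two reward functions R and R' on a finite MDP satisfy R'(s,a,s') = R(s,a,s') + v(s) - γ·v(s') for some v : S → ℝ (potential-based shaping), then the optimal Q-functions satisfy Q'*(s,a) = Q*(s,a) + v(s) for all (s,a); consequently argmax_a Q'*(s,a) = argmax_a Q*(s,a) for every state s, so the shaped MDP has the same optimal policies. -/
/-!
Both sides are fixed points of one and the same Bellman operator: `Q'` by hypothesis, and
`Q + v` because the shaping terms telescope (`v s` comes out of the average since the transition
row sums to one, and `γ v s'` is absorbed into `γ · max_a' (Q s' a' + v s')`). The Bellman
operator is a `γ`-contraction for the sup metric, so it has at most one fixed point.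
-/

open Finset

theorem abs_ciSup_sub_ciSup_le_dist {A : Type*} [Fintype A] [Nonempty A] (f g : A → ℝ) :
    |(⨆ a, f a) - ⨆ a, g a| ≤ dist f g := by
  have ciSup_le_ciSup_add_dist : ∀ f g : A → ℝ, (⨆ a, f a) ≤ (⨆ a, g a) + dist f g := by
    intro f g
    refine ciSup_le fun a => ?_
    have hfg : f a - g a ≤ dist f g := (le_abs_self _).trans (dist_le_pi_dist f g a)
    have hg : g a ≤ ⨆ a, g a := le_ciSup (Set.finite_range g).bddAbove a
    linarith
  have h₁ := ciSup_le_ciSup_add_dist f g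
  have h₂ := ciSup_le_ciSup_add_dist g f
  rw [dist_comm] at h₂
  exact abs_sub_le_iff.2 ⟨by linarith, by linarith⟩

section Bellman

variable {S A : Type*} [Fintype S] [Fintype A]

noncomputable def bellmanOp (P R : S → A → S → ℝ) (γ : ℝ) (Q : S → A → ℝ) : S → A → ℝ :=
  fun s a => ∑ s', P s a s' * (R s a s' + γ * ⨆ a', Q s' a')

def shapedReward (R : S → A → S → ℝ) (v : S → ℝ) (γ : ℝ) : S → A → S → ℝ :=
  fun s a s' => R s a s' + v s - γ * v s'

variable {P : S → A → S → ℝ} (hPnn : ∀ s a s', 0 ≤ P s a s') (hProw : ∀ s a, ∑ s', P s a s' = 1)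
include hProw

theorem bellmanOp_shapedReward_add_potential [Nonempty A] (R : S → A → S → ℝ) (v : S → ℝ)
    (γ : ℝ) (Q : S → A → ℝ) :
    bellmanOp P (shapedReward R v γ) γ (fun s a => Q s a + v s) =
      fun s a => bellmanOp P R γ Q s a + v s := by
  funext s a
  have hmax : ∀ s', ⨆ a', (Q s' a' + v s') = (⨆ a', Q s' a') + v s' := fun s' =>
    (ciSup_add (Set.finite_range _).bddAbove _).symm
  simp only [bellmanOp, shapedReward, hmax]
  calc _ = ∑ s', (P s a s' * (R s a s' + γ * ⨆ a', Q s' a') + P s a s' * v s) :=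
        sum_congr rfl fun s' _ => by ring
    _ = _ := by rw [sum_add_distrib, ← sum_mul, hProw, one_mul]

include hPnn

theorem dist_bellmanOp_le [Nonempty A] (R : S → A → S → ℝ) {γ : ℝ} (hγ : 0 ≤ γ)
    (Q₁ Q₂ : S → A → ℝ) :
    dist (bellmanOp P R γ Q₁) (bellmanOp P R γ Q₂) ≤ γ * dist Q₁ Q₂ := by
  have hd : 0 ≤ γ * dist Q₁ Q₂ := mul_nonneg hγ dist_nonneg
  refine (dist_pi_le_iff hd).2 fun s => (dist_pi_le_iff hd).2 fun a => ?_
  have hdiff : bellmanOp P R γ Q₁ s a - bellmanOp P R γ Q₂ s a =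
      γ * ∑ s', P s a s' * ((⨆ a', Q₁ s' a') - ⨆ a', Q₂ s' a') := by
    simp only [bellmanOp, mul_sum, ← sum_sub_distrib]
    exact sum_congr rfl fun s' _ => by ring
  rw [Real.dist_eq, hdiff, abs_mul, abs_of_nonneg hγ]
  gcongr
  calc |∑ s', P s a s' * ((⨆ a', Q₁ s' a') - ⨆ a', Q₂ s' a')|
      ≤ ∑ s', P s a s' * |(⨆ a', Q₁ s' a') - ⨆ a', Q₂ s' a'| := by
        refine (abs_sum_le_sum_abs _ _).trans (le_of_eq (sum_congr rfl fun s' _ => ?_))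
        rw [abs_mul, abs_of_nonneg (hPnn s a s')]
    _ ≤ ∑ s', P s a s' * dist Q₁ Q₂ := by
        gcongr with s' _
        · exact hPnn s a s'
        · exact (abs_ciSup_sub_ciSup_le_dist _ _).trans (dist_le_pi_dist Q₁ Q₂ s')
    _ = dist Q₁ Q₂ := by rw [← sum_mul, hProw, one_mul]

theorem bellmanOp_contractingWith [Nonempty A] (R : S → A → S → ℝ) {γ : ℝ} (hγ0 : 0 ≤ γ)
    (hγ1 : γ < 1) : ContractingWith ⟨γ, hγ0⟩ (bellmanOp P R γ) :=
  ⟨hγ1, LipschitzWith.of_dist_le_mul fun Q₁ Q₂ => dist_bellmanOp_le hPnn hProw R hγ0 Q₁ Q₂⟩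

end Bellman

theorem stmt13_general {S A : Type*} [Fintype S] [Fintype A] [Nonempty A]
    (P : S → A → S → ℝ)
    (hPnn : ∀ s a s', 0 ≤ P s a s')
    (hProw : ∀ s a, ∑ s', P s a s' = 1)
    (R : S → A → S → ℝ) (v : S → ℝ) (γ : ℝ) (hγ0 : 0 ≤ γ) (hγ1 : γ < 1)
    (Q Q' : S → A → ℝ)
    (hQ : ∀ s a, Q s a = ∑ s', P s a s' * (R s a s' + γ * ⨆ a' : A, Q s' a'))
    (hQ' : ∀ s a, Q' s a =
      ∑ s', P s a s' * ((R s a s' + v s - γ * v s') + γ * ⨆ a' : A, Q' s' a')) :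
    (∀ s a, Q' s a = Q s a + v s) ∧
    (∀ s : S, ∀ a : A, (∀ a', Q' s a' ≤ Q' s a) ↔ (∀ a', Q s a' ≤ Q s a)) := by
  have hfixQ : bellmanOp P R γ Q = Q := (funext fun s => funext (hQ s)).symm
  have hfixQ' : bellmanOp P (shapedReward R v γ) γ Q' = Q' :=
    (funext fun s => funext (hQ' s)).symm
  have hfixShift : bellmanOp P (shapedReward R v γ) γ (fun s a => Q s a + v s) =
      fun s a => Q s a + v s := by
    rw [bellmanOp_shapedReward_add_potential hProw, hfixQ]
  have hshift : Q' = fun s a => Q s a + v s :=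
    (bellmanOp_contractingWith hPnn hProw _ hγ0 hγ1).fixedPoint_unique' hfixQ' hfixShift
  refine ⟨fun s a => by rw [hshift], fun s a => ?_⟩
  simp only [hshift, add_le_add_iff_right]

/-- Potential-based reward shaping `R'(s,a,s') = R(s,a,s') + v(s) - γ·v(s')` shifts the
optimal Q-function by `v(s)` and hence preserves the optimal actions in every state. -/
theorem stmt13 {S A : Type*} [Fintype S] [Fintype A] [Nonempty S] [Nonempty A]
    (P : S → A → S → ℝ)
    (hPnn : ∀ s a s', 0 ≤ P s a s')
    (hProw : ∀ s a, ∑ s', P s a s' = 1)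
    (R : S → A → S → ℝ) (v : S → ℝ) (γ : ℝ) (hγ0 : 0 ≤ γ) (hγ1 : γ < 1)
    (Q Q' : S → A → ℝ)
    (hQ : ∀ s a, Q s a = ∑ s', P s a s' * (R s a s' + γ * ⨆ a' : A, Q s' a'))
    (hQ' : ∀ s a, Q' s a =
      ∑ s', P s a s' * ((R s a s' + v s - γ * v s') + γ * ⨆ a' : A, Q' s' a')) :
    (∀ s a, Q' s a = Q s a + v s) ∧
    (∀ s : S, ∀ a : A, (∀ a', Q' s a' ≤ Q' s a) ↔ (∀ a', Q s a' ≤ Q s a)) :=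
  stmt13_general P hPnn hProw R v γ hγ0 hγ1 Q Q' hQ hQ'
end
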